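/- Error Propagated Through Squared ℓ2-Norm Pooling (Lemma C.5): Let N, C be positive integers with C dividing N, and for a vector φ ∈ ℝ^N define pool_C(φ) ∈ ℝ^C by pool_C(φ)_j := Σ_{l=(j−1)N/C+1}^{jN/C} φ_l² for j = 1,…,C (the sum of squares over the j-th consecutive block of N/C entries). Let φ, φ̃ ∈ ℝ^N with ‖φ‖₂ ≤ 1, ‖φ̃‖₂ ≤ 1, and ‖φ − φ̃‖₂ ≤ ε. Then ‖pool_C(φ) − pool_C(φ̃)‖₂ ≤ 2Nε/√C. -/

import Mathlib

/-! Each pooled coordinate is a sum of `φ l ^ 2 - φt l ^ 2 = (φ - φt) l * (φ + φt) l` over one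
block, so by Cauchy–Schwarz it moves by at most `‖φ - φt‖ * ‖φ + φt‖ ≤ 2ε`. Hence the pooled
error is at most `√C * 2ε`, and `√C * 2ε ≤ 2Nε / √C` because `C ≤ N`. -/

noncomputable section

/-- Squared `ℓ₂`-norm pooling: the `j`-th output entry is the sum of the squares of the
entries in the `j`-th consecutive block of `N/C` coordinates. -/
def poolC (N C : ℕ) (φ : EuclideanSpace ℝ (Fin N)) : EuclideanSpace ℝ (Fin C) :=
  WithLp.toLp 2 (fun j => ∑ l : Fin N, if (l : ℕ) / (N / C) = (j : ℕ) then (φ l) ^ 2 else 0)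

namespace EuclideanSpace

variable {ι : Type*} [Fintype ι]

theorem sum_abs_mul_abs_le_norm_mul_norm (x y : EuclideanSpace ℝ ι) :
    ∑ i, |x i| * |y i| ≤ ‖x‖ * ‖y‖ := by
  simpa only [norm_eq, Real.norm_eq_abs, sq_abs] using
    Real.sum_mul_le_sqrt_mul_sqrt Finset.univ (fun i => |x i|) (fun i => |y i|)

theorem abs_sum_sq_sub_sq_le (s : Finset ι) (x y : EuclideanSpace ℝ ι) :
    |∑ i ∈ s, (x i ^ 2 - y i ^ 2)| ≤ ‖x - y‖ * ‖x + y‖ :=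
  calc |∑ i ∈ s, (x i ^ 2 - y i ^ 2)| ≤ ∑ i ∈ s, |(x - y) i| * |(x + y) i| := by
        refine (Finset.abs_sum_le_sum_abs _ _).trans_eq (Finset.sum_congr rfl fun i _ => ?_)
        rw [sq_sub_sq, abs_mul, mul_comm, PiLp.sub_apply, PiLp.add_apply]
    _ ≤ ∑ i, |(x - y) i| * |(x + y) i| :=
        Finset.sum_le_sum_of_subset_of_nonneg s.subset_univ fun _ _ _ => by positivity
    _ ≤ ‖x - y‖ * ‖x + y‖ := sum_abs_mul_abs_le_norm_mul_norm _ _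

theorem norm_le_sqrt_card_mul {x : EuclideanSpace ℝ ι} {M : ℝ} (h : ∀ i, |x i| ≤ M) :
    ‖x‖ ≤ √(Fintype.card ι) * M := by
  rcases isEmpty_or_nonempty ι with _ | ⟨⟨i₀⟩⟩
  · simp [Subsingleton.elim x 0]
  have hM : 0 ≤ M := (abs_nonneg _).trans (h i₀)
  rw [norm_eq, ← Real.sqrt_sq hM, ← Real.sqrt_mul (Nat.cast_nonneg _)]
  refine Real.sqrt_le_sqrt ?_
  calc ∑ i, ‖x i‖ ^ 2 ≤ ∑ _i : ι, M ^ 2 := Finset.sum_le_sum fun i _ => by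
        rw [Real.norm_eq_abs]; exact pow_le_pow_left₀ (abs_nonneg _) (h i) 2
    _ = Fintype.card ι * M ^ 2 := by simp

end EuclideanSpace

theorem poolC_apply (N C : ℕ) (φ : EuclideanSpace ℝ (Fin N)) (j : Fin C) :
    poolC N C φ j = ∑ l ∈ Finset.univ.filter (fun l : Fin N => l / (N / C) = j), φ l ^ 2 := by
  simp [poolC, Finset.sum_filter]

theorem norm_poolC_sub_le (N C : ℕ) (φ ψ : EuclideanSpace ℝ (Fin N)) :
    ‖poolC N C φ - poolC N C ψ‖ ≤ √C * (‖φ - ψ‖ * ‖φ + ψ‖) := by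
  have h (j : Fin C) : |(poolC N C φ - poolC N C ψ) j| ≤ ‖φ - ψ‖ * ‖φ + ψ‖ := by
    rw [PiLp.sub_apply, poolC_apply, poolC_apply, ← Finset.sum_sub_distrib]
    exact EuclideanSpace.abs_sum_sq_sub_sq_le _ φ ψ
  simpa using EuclideanSpace.norm_le_sqrt_card_mul h

/-- **Error propagated through squared ℓ₂-norm pooling** (Lemma C.5).
If `‖φ‖₂ ≤ 1`, `‖φ̃‖₂ ≤ 1` and `‖φ - φ̃‖₂ ≤ ε`, then
`‖pool_C(φ) - pool_C(φ̃)‖₂ ≤ 2Nε/√C`. -/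
theorem error_propagated_through_pooling
    (N C : ℕ) (hN : 0 < N) (hC : 0 < C) (hdvd : C ∣ N)
    (φ φt : EuclideanSpace ℝ (Fin N))
    (hφ : ‖φ‖ ≤ 1) (hφt : ‖φt‖ ≤ 1)
    (ε : ℝ) (hε : ‖φ - φt‖ ≤ ε) :
    ‖poolC N C φ - poolC N C φt‖ ≤ 2 * N * ε / Real.sqrt C := by
  have hε₀ : 0 ≤ ε := (norm_nonneg _).trans hε
  have hsum : ‖φ + φt‖ ≤ 2 := (norm_add_le _ _).trans (by linarith)
  have hCN : (C : ℝ) ≤ N := by exact_mod_cast Nat.le_of_dvd hN hdvd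
  have hsqrtC : 0 < √(C : ℝ) := Real.sqrt_pos.mpr (by exact_mod_cast hC)
  calc ‖poolC N C φ - poolC N C φt‖ ≤ √C * (‖φ - φt‖ * ‖φ + φt‖) := norm_poolC_sub_le N C φ φt
    _ ≤ √C * (ε * 2) := by gcongr
    _ = C * (2 * ε) / √C := by
        rw [eq_div_iff hsqrtC.ne', mul_right_comm, Real.mul_self_sqrt (Nat.cast_nonneg _)]; ring
    _ ≤ N * (2 * ε) / √C := by gcongr
    _ = 2 * N * ε / √C := by ring
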